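/- Let A be a ring of rank n with a unital basis β (a ℤ-basis with first element 1). Then disc(A) ≡ dpf(B(A,β))² (mod 4), where B(A,β) is the Gram matrix of the trace pairing in the basis β and dpf denotes the discriminant pfaffian. -/

import Mathlib

/-!
Write `B = (b_{ij})` for the Gram matrix and `C` for the minor obtained by deleting the row and
column of `e₁ = 1`. Then `b₁₁ = tr 1 = n`, and `b₁ᵢ = tr λ(eᵢ) ≡ tr λ(eᵢ)² = bᵢᵢ (mod 2)` because
`tr(M²) ≡ tr(M)` modulo 2.

Modulo 2, `det C` is a sum over permutations of `{2,…,n}`; in characteristic 2 the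
non-involutions cancel against their inverses, and what remains is `dpf(B)`, the fixed points
being accounted for by `b₁ᵢ ≡ bᵢᵢ`. Hence `dpf(B)² ≡ (det C)² (mod 4)`.

Expanding along the first row, `det B = n · det C + Q(C, r)`, where `Q(C, r)` is the determinant
of `C` bordered by `r = (b₁₂,…,b₁ₙ)` with corner `0`. Because `r ≡ diag C (mod 2)`, in `ℤ/4`
one has `Q(C, r) = (det C)² - n · det C`: split off an invertible pivot block (an odd diagonal
entry, or else the `2 × 2` block of an odd off-diagonal entry) by a congruence of determinant
`1`, which keeps `r ≡ diag C`, and note that the identity is additive over block sums; when every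
entry of `C` is even both sides vanish. Hence `det B ≡ (det C)² (mod 4)`.
-/

open Matrix

/-- The Gram matrix of a ring of rank `n` with respect to a ℤ-basis `b`:
its `(i,j)` entry is the trace of the matrix of left multiplication by `b i * b j`. -/
noncomputable def gramMatrix {n : ℕ} {A : Type} [Ring A] (b : Module.Basis (Fin n) ℤ A) :
    Matrix (Fin n) (Fin n) ℤ :=
  Matrix.of fun i j => (Algebra.leftMulMatrix b (b i * b j)).trace

/-- The discriminant of a ring of rank `n` with respect to a ℤ-basis `b`. -/
noncomputable def disc {n : ℕ} {A : Type} [Ring A] (b : Module.Basis (Fin n) ℤ A) : ℤ :=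
  (gramMatrix b).det

/-- The discriminant pfaffian of a matrix `B ∈ Mₙ(ℤ)`.  Pairs `(J, P)` of an
even-cardinality subset `J ⊆ {2,…,n}` together with a perfect matching `P` on `J`
correspond bijectively to involutions `σ` of `{1,…,n}` fixing `1` (namely, the
2-cycles of `σ` are the blocks of `P` and `σ` fixes everything outside `J`).  The
associated term `(∏_{{i,j} ∈ P} b_{ij})·(∏_{k ∈ {2,…,n}∖J} b_{1k})` is the product,
over non-first indices `i`, of `b_{1i}` if `σ` fixes `i`, of `b_{i,σ(i)}` if `i < σ(i)`,
and of `1` if `σ(i) < i`. -/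
def dpf (n : ℕ) [NeZero n] (B : Matrix (Fin n) (Fin n) ℤ) : ℤ :=
  ∑ σ ∈ Finset.univ.filter (fun σ : Equiv.Perm (Fin n) => σ * σ = 1 ∧ σ 0 = 0),
    ∏ i ∈ Finset.univ.filter (fun i : Fin n => i ≠ 0),
      if σ i = i then B 0 i else if i < σ i then B i (σ i) else 1

open Finset

section CharTwo

variable {R : Type*} [CommRing R] [CharP R 2] {ι : Type*} [Fintype ι] [DecidableEq ι]

theorem sum_sum_eq_sum_diag_of_charTwo (f : ι → ι → R) (hf : ∀ i j, f i j = f j i) :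
    ∑ i, ∑ j, f i j = ∑ i, f i i := by
  have hoff : ∑ p ∈ (univ : Finset ι).offDiag, f p.1 p.2 = 0 := by
    refine sum_involution (fun p _ => p.swap) (fun p _ => ?_) (fun p hp _ => ?_)
      (fun p hp => by simpa [and_comm, eq_comm] using hp) (fun p _ => rfl)
    · rw [Prod.fst_swap, Prod.snd_swap, hf p.2, CharTwo.add_self_eq_zero]
    · exact fun h => (mem_offDiag.1 hp).2.2 (congrArg Prod.snd h)
  rw [← sum_product', ← diag_union_offDiag, sum_union (disjoint_diag_offDiag _), hoff, add_zero,
    sum_diag]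

theorem Matrix.IsSymm.dotProduct_mulVec_self_of_charTwo {M : Matrix ι ι R} (hM : M.IsSymm)
    (u : ι → R) : u ⬝ᵥ (M *ᵥ u) = ∑ i, M i i * u i ^ 2 := by
  simp only [dotProduct, mulVec, mul_sum]
  rw [sum_sum_eq_sum_diag_of_charTwo _ fun i j => by rw [← hM.apply i j]; ring]
  exact sum_congr rfl fun i _ => by ring

theorem Matrix.IsSymm.det_eq_sum_involutions_of_charTwo {M : Matrix ι ι R} (hM : M.IsSymm) :
    M.det = ∑ σ ∈ univ.filter (fun σ : Equiv.Perm ι => σ * σ = 1), ∏ i, M (σ i) i := by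
  have hsign (σ : Equiv.Perm ι) (x : R) : Equiv.Perm.sign σ • x = x := by
    rcases Int.units_eq_one_or (Equiv.Perm.sign σ) with h | h <;> simp [h, CharTwo.neg_eq]
  have hinv (σ : Equiv.Perm ι) : ∏ i, M (σ⁻¹ i) i = ∏ i, M (σ i) i := by
    rw [← σ.prod_comp univ _ (by simp)]
    simp [hM.apply]
  rw [det_apply, ← sum_filter_add_sum_filter_not univ (fun σ : Equiv.Perm ι => σ * σ = 1)]
  simp only [hsign]
  rw [add_eq_left]
  refine sum_involution (fun σ _ => σ⁻¹) (fun σ _ => by rw [hinv, CharTwo.add_self_eq_zero])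
    (fun σ hσ _ h => ?_) (fun σ hσ => ?_) (fun σ _ => inv_inv σ)
  · exact (mem_filter.1 hσ).2 (mul_eq_one_iff_eq_inv.2 h.symm)
  · simpa [← _root_.mul_inv_rev] using hσ

end CharTwo

theorem sum_involutions_fixing_eq_sum_subtype {α R : Type*} [Fintype α] [DecidableEq α]
    [CommSemiring R] (a : α) (M : Matrix α α R) :
    ∑ σ ∈ univ.filter (fun σ : Equiv.Perm α => σ * σ = 1 ∧ σ a = a),
        ∏ i ∈ univ.filter (· ≠ a), M (σ i) i
      = ∑ π ∈ univ.filter (fun π : Equiv.Perm {i // i ≠ a} => π * π = 1), ∏ x, M (π x) x := by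
  symm
  refine sum_bij (fun π _ => Equiv.Perm.ofSubtype π) (fun π hπ => ?_)
    (fun _ _ _ _ h => Equiv.Perm.ofSubtype_injective h) (fun σ hσ => ?_) (fun π _ => ?_)
  · rw [mem_filter] at hπ ⊢
    exact ⟨mem_univ _, by rw [← map_mul, hπ.2, map_one],
      Equiv.Perm.ofSubtype_apply_of_not_mem π (not_not.2 rfl)⟩
  · obtain ⟨-, hσσ, hσa⟩ := mem_filter.1 hσ
    have hfix (x : α) : σ x ≠ a ↔ x ≠ a := not_iff_not.2 (σ.injective.eq_iff' hσa)
    have hσ' := Equiv.Perm.ofSubtype_subtypePerm (p := (· ≠ a)) hfix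
      fun x hx h => hx (by rw [h, hσa])
    refine ⟨σ.subtypePerm hfix, mem_filter.2 ⟨mem_univ _, Equiv.Perm.ofSubtype_injective ?_⟩, hσ'⟩
    rw [map_mul, hσ', hσσ, map_one]
  · rw [prod_subtype (F := inferInstance) (univ.filter (· ≠ a)) (p := (· ≠ a)) (by simp)
      fun i => M (Equiv.Perm.ofSubtype π i) i]
    simp only [Equiv.Perm.ofSubtype_apply_coe]

section Border

variable {R : Type*} [CommRing R] {ι κ ρ : Type*}

def borderMatrix (u v : ι → R) (C : Matrix ι ι R) : Matrix (Unit ⊕ ι) (Unit ⊕ ι) R :=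
  fromBlocks 0 (replicateRow Unit u) (replicateCol Unit v) C

theorem borderMatrix_transpose (u v : ι → R) (C : Matrix ι ι R) :
    (borderMatrix u v C)ᵀ = borderMatrix v u Cᵀ := by
  simp [borderMatrix, fromBlocks_transpose]

theorem borderMatrix_submatrix (e : κ ≃ ι) (u v : ι → R) (C : Matrix ι ι R) :
    (borderMatrix u v C).submatrix ((Equiv.refl Unit).sumCongr e) ((Equiv.refl Unit).sumCongr e)
      = borderMatrix (u ∘ e) (v ∘ e) (C.submatrix e e) := by
  ext (_ | i) (_ | j) <;> rfl

theorem borderMatrix_eq_updateRow [DecidableEq ι] (u v : ι → R) (C : Matrix ι ι R) :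
    borderMatrix u v C = (borderMatrix 0 v C).updateRow (Sum.inl ()) (Sum.elim 0 u) := by
  ext (_ | i) (_ | j) <;> simp [borderMatrix]

variable [Fintype ι] [DecidableEq ι] [Fintype κ] [DecidableEq κ] [Fintype ρ] [DecidableEq ρ]

def borderedDet (C : Matrix ι ι R) (r : ι → R) : R :=
  (borderMatrix r r C).det

theorem det_borderMatrix_add_left (u₁ u₂ v : ι → R) (C : Matrix ι ι R) :
    (borderMatrix (u₁ + u₂) v C).det = (borderMatrix u₁ v C).det + (borderMatrix u₂ v C).det := by
  rw [borderMatrix_eq_updateRow, borderMatrix_eq_updateRow u₁, borderMatrix_eq_updateRow u₂,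
    ← det_updateRow_add, ← Sum.elim_add_add, add_zero]

theorem det_borderMatrix_smul_left (c : R) (u v : ι → R) (C : Matrix ι ι R) :
    (borderMatrix (c • u) v C).det = c * (borderMatrix u v C).det := by
  rw [borderMatrix_eq_updateRow, borderMatrix_eq_updateRow u, ← det_updateRow_smul]
  congr 2
  ext (_ | i) <;> simp

theorem borderedDet_smul (c : R) (C : Matrix ι ι R) (r : ι → R) :
    borderedDet C (c • r) = c ^ 2 * borderedDet C r := by
  rw [borderedDet, det_borderMatrix_smul_left, ← det_transpose, borderMatrix_transpose,
    det_borderMatrix_smul_left, ← det_transpose, borderMatrix_transpose, transpose_transpose,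
    borderedDet, sq, mul_assoc]

theorem borderedDet_submatrix_equiv (e : κ ≃ ι) (C : Matrix ι ι R) (r : ι → R) :
    borderedDet (C.submatrix e e) (r ∘ e) = borderedDet C r := by
  rw [borderedDet, ← borderMatrix_submatrix, det_submatrix_equiv_self, borderedDet]

theorem borderedDet_transpose_mul_mul (U C : Matrix ι ι R) (r : ι → R) :
    borderedDet (Uᵀ * C * U) (Uᵀ *ᵥ r) = U.det ^ 2 * borderedDet C r := by
  have hcongr : borderMatrix (Uᵀ *ᵥ r) (Uᵀ *ᵥ r) (Uᵀ * C * U)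
      = (fromBlocks (1 : Matrix Unit Unit R) 0 0 U)ᵀ * borderMatrix r r C
        * fromBlocks (1 : Matrix Unit Unit R) 0 0 U := by
    nth_rewrite 1 [mulVec_transpose]
    simp [borderMatrix, fromBlocks_transpose, fromBlocks_multiply, replicateRow_vecMul,
      replicateCol_mulVec, Matrix.mul_assoc]
  rw [borderedDet, hcongr, det_mul, det_mul, det_transpose, det_fromBlocks_zero₂₁, det_one,
    one_mul, borderedDet]
  ring

theorem borderedDet_unit (c : R) (r : Unit → R) :
    borderedDet (of fun _ _ => c) r = -r () ^ 2 := by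
  rw [borderedDet, ← det_submatrix_equiv_self (finTwoEquiv.trans Equiv.boolEquivPUnitSumPUnit),
    det_fin_two]
  simp [borderMatrix, finTwoEquiv, Equiv.boolEquivPUnitSumPUnit]
  ring

theorem det_borderMatrix_fromBlocks_inl (E : Matrix κ κ R) (G : Matrix ρ ρ R) (x : κ → R)
    (y : ρ → R) :
    (borderMatrix (Sum.elim x 0) (Sum.elim x y) (fromBlocks E 0 0 G)).det
      = borderedDet E x * G.det := by
  have h : (borderMatrix (Sum.elim x 0) (Sum.elim x y) (fromBlocks E 0 0 G)).submatrix
      (Equiv.sumAssoc Unit κ ρ) (Equiv.sumAssoc Unit κ ρ)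
      = fromBlocks (borderMatrix x x E) 0 (fromCols (replicateCol Unit y) 0) G := by
    ext ((_ | i) | i) ((_ | j) | j) <;> rfl
  rw [← det_submatrix_equiv_self (Equiv.sumAssoc Unit κ ρ), h, det_fromBlocks_zero₁₂,
    borderedDet]

theorem borderedDet_fromBlocks_zero (E : Matrix κ κ R) (G : Matrix ρ ρ R) (x : κ → R)
    (y : ρ → R) :
    borderedDet (fromBlocks E 0 0 G) (Sum.elim x y)
      = G.det * borderedDet E x + E.det * borderedDet G y := by
  let e : Unit ⊕ ρ ⊕ κ ≃ Unit ⊕ κ ⊕ ρ := (Equiv.refl Unit).sumCongr (Equiv.sumComm ρ κ)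
  have hswap : (borderMatrix (Sum.elim (0 : κ → R) y) (Sum.elim x y)
      (fromBlocks E 0 0 G)).submatrix e e
      = borderMatrix (Sum.elim y (0 : κ → R)) (Sum.elim y x) (fromBlocks G 0 0 E) := by
    ext (_ | i | i) (_ | j | j) <;> rfl
  have hsplit : Sum.elim x y = Sum.elim x 0 + Sum.elim (0 : κ → R) y := by
    rw [← Sum.elim_add_add, add_zero, zero_add]
  rw [borderedDet]
  nth_rewrite 1 [hsplit]
  rw [det_borderMatrix_add_left, det_borderMatrix_fromBlocks_inl, ← det_submatrix_equiv_self e,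
    hswap, det_borderMatrix_fromBlocks_inl]
  ring

theorem det_fromBlocks_eq_mul_det_add_borderedDet (a : R) (C : Matrix ι ι R) (r : ι → R) :
    (fromBlocks (of fun _ _ => a) (replicateRow Unit r) (replicateCol Unit r) C).det
      = a * C.det + borderedDet C r := by
  have hrow : fromBlocks (of fun _ _ => a) (replicateRow Unit r) (replicateCol Unit r) C
      = (borderMatrix 0 r C).updateRow (Sum.inl ())
          (Sum.elim (fun _ => a) 0 + Sum.elim (0 : Unit → R) r) := by
    ext (_ | i) (_ | j) <;> simp [borderMatrix]
  have hcorner : (borderMatrix 0 r C).updateRow (Sum.inl ()) (Sum.elim (fun _ => a) 0)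
      = fromBlocks (of fun _ _ => a) 0 (replicateCol Unit r) C := by
    ext (_ | i) (_ | j) <;> simp [borderMatrix]
  rw [hrow, det_updateRow_add, hcorner, det_fromBlocks_zero₁₂, det_unique,
    ← borderMatrix_eq_updateRow, borderedDet]
  rfl

end Border

theorem ZMod.even_four_iff (x : ZMod 4) : Even x ↔ x = 0 ∨ x = 2 := by
  unfold Even
  revert x
  decide

theorem ZMod.even_four_iff_castHom_eq_zero (x : ZMod 4) :
    Even x ↔ ZMod.castHom (by norm_num : 2 ∣ 4) (ZMod 2) x = 0 := by
  rw [ZMod.even_four_iff]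
  revert x
  decide

theorem ZMod.isUnit_of_not_even_four {x : ZMod 4} (hx : ¬Even x) : IsUnit x := by
  rw [ZMod.even_four_iff] at hx
  revert x
  decide

section Characteristic

variable {ι : Type*} [Fintype ι] [DecidableEq ι]

def IsCharacteristic {R : Type*} [Ring R] (C : Matrix ι ι R) (r : ι → R) : Prop :=
  ∀ i, Even (C i i - r i)

theorem IsCharacteristic.even_dotProduct_mulVec_sub {C : Matrix ι ι (ZMod 4)} {r : ι → ZMod 4}
    (hr : IsCharacteristic C r) (hC : C.IsSymm) (u : ι → ZMod 4) :
    Even (u ⬝ᵥ (C *ᵥ u) - u ⬝ᵥ r) := by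
  set φ := ZMod.castHom (by norm_num : 2 ∣ 4) (ZMod 2)
  have hdiag (i : ι) : φ (C i i) = φ (r i) := by
    rw [← sub_eq_zero, ← map_sub, ← ZMod.even_four_iff_castHom_eq_zero]
    exact hr i
  have hmap : φ ∘ (C *ᵥ u) = C.map φ *ᵥ (φ ∘ u) := funext (RingHom.map_mulVec φ C u)
  rw [ZMod.even_four_iff_castHom_eq_zero, map_sub, RingHom.map_dotProduct,
    RingHom.map_dotProduct, hmap, (hC.map φ).dotProduct_mulVec_self_of_charTwo, sub_eq_zero,
    dotProduct]
  exact sum_congr rfl fun i _ => by rw [map_apply, ZMod.pow_card, hdiag, mul_comm]; rfl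

theorem IsCharacteristic.transpose_mul_mul {C : Matrix ι ι (ZMod 4)} {r : ι → ZMod 4}
    (hr : IsCharacteristic C r) (hC : C.IsSymm) (U : Matrix ι ι (ZMod 4)) :
    IsCharacteristic (Uᵀ * C * U) (Uᵀ *ᵥ r) := fun i => by
  rw [mul_mul_apply]
  exact hr.even_dotProduct_mulVec_sub hC _

end Characteristic

section Identity

variable {ι κ ρ : Type*} [Fintype ι] [DecidableEq ι] [Fintype κ] [DecidableEq κ]
  [Fintype ρ] [DecidableEq ρ]

def BorderedDetIdentity (C : Matrix ι ι (ZMod 4)) : Prop :=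
  ∀ r, IsCharacteristic C r → borderedDet C r = C.det ^ 2 - (Fintype.card ι + 1) * C.det

theorem borderedDet_eq_zero_of_even (C : Matrix ι ι (ZMod 4)) {r : ι → ZMod 4}
    (hr : ∀ i, Even (r i)) : borderedDet C r = 0 := by
  choose s hs using fun i => (hr i).exists_two_nsmul
  have hr2 : r = (2 : ZMod 4) • s :=
    funext fun i => by rw [hs, Pi.smul_apply, two_nsmul, two_smul]
  rw [hr2, borderedDet_smul, show (2 : ZMod 4) ^ 2 = 0 by decide, zero_mul]

theorem BorderedDetIdentity.of_submatrix_equiv {C : Matrix ι ι (ZMod 4)} (e : κ ≃ ι)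
    (h : BorderedDetIdentity (C.submatrix e e)) : BorderedDetIdentity C := fun r hr => by
  have := h (r ∘ e) fun i => hr (e i)
  rwa [borderedDet_submatrix_equiv, det_submatrix_equiv_self, Fintype.card_congr e] at this

theorem BorderedDetIdentity.of_transpose_mul_mul {C : Matrix ι ι (ZMod 4)} (hC : C.IsSymm)
    {U : Matrix ι ι (ZMod 4)} (hU : U.det = 1) (h : BorderedDetIdentity (Uᵀ * C * U)) :
    BorderedDetIdentity C := fun r hr => by
  have := h _ (hr.transpose_mul_mul hC U)
  rwa [borderedDet_transpose_mul_mul, det_mul, det_mul, det_transpose, hU, one_pow, one_mul,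
    one_mul, mul_one] at this

theorem BorderedDetIdentity.fromBlocks {E : Matrix κ κ (ZMod 4)} {G : Matrix ρ ρ (ZMod 4)}
    (hE : BorderedDetIdentity E) (hG : BorderedDetIdentity G) :
    BorderedDetIdentity (fromBlocks E 0 0 G) := fun r hr => by
  -- the two sides differ by `-e g (e - 1) (g - 1)`, and both `e (e - 1)` and `g (g - 1)` are even
  have key : ∀ e g k l : ZMod 4, g * (e ^ 2 - (k + 1) * e) + e * (g ^ 2 - (l + 1) * g)
      = (e * g) ^ 2 - (k + l + 1) * (e * g) := by decide
  rw [← Sum.elim_comp_inl_inr r, borderedDet_fromBlocks_zero,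
    hE (r ∘ Sum.inl) fun i => hr (.inl i), hG (r ∘ Sum.inr) fun i => hr (.inr i),
    det_fromBlocks_zero₁₂, Fintype.card_sum, Nat.cast_add, key]

theorem BorderedDetIdentity.fromBlocks_of_isUnit {A : Matrix κ κ (ZMod 4)}
    (B : Matrix κ ρ (ZMod 4)) {D : Matrix ρ ρ (ZMod 4)} (hA : A.IsSymm) (hD : D.IsSymm)
    (hAu : IsUnit A.det) (hAid : BorderedDetIdentity A)
    (hS : BorderedDetIdentity (D - Bᵀ * A⁻¹ * B)) :
    BorderedDetIdentity (Matrix.fromBlocks A B Bᵀ D) := by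
  let U : Matrix (κ ⊕ ρ) (κ ⊕ ρ) (ZMod 4) := Matrix.fromBlocks 1 (-(A⁻¹ * B)) 0 1
  have hU : U.det = 1 := by rw [det_fromBlocks_zero₂₁, det_one, det_one, one_mul]
  have hAinvT : A⁻¹ᵀ = A⁻¹ := hA.inv
  have hinv : A * A⁻¹ = 1 := mul_nonsing_inv A hAu
  have hinv' : A⁻¹ * A = 1 := nonsing_inv_mul A hAu
  have hdiag : Uᵀ * Matrix.fromBlocks A B Bᵀ D * U
      = Matrix.fromBlocks A 0 0 (D - Bᵀ * A⁻¹ * B) := by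
    simp only [U, fromBlocks_transpose, fromBlocks_multiply, transpose_neg, transpose_mul,
      hAinvT, transpose_one, transpose_zero, Matrix.one_mul, Matrix.mul_one, Matrix.zero_mul,
      Matrix.mul_zero, add_zero, Matrix.neg_mul, Matrix.mul_neg, Matrix.mul_assoc, hinv, hinv',
      ← Matrix.mul_assoc A, neg_add_cancel, neg_zero, zero_add, neg_add_eq_sub]
  refine .of_transpose_mul_mul (hA.fromBlocks rfl hD) hU ?_
  rw [hdiag]
  exact hAid.fromBlocks hS

theorem BorderedDetIdentity.of_pivot {C : Matrix ι ι (ZMod 4)} (hC : C.IsSymm) (f : κ ↪ ι)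
    (hunit : IsUnit (C.submatrix f f).det) (hpivot : BorderedDetIdentity (C.submatrix f f))
    (hrest : ∀ G : Matrix {i // i ∉ Set.range f} {i // i ∉ Set.range f} (ZMod 4), G.IsSymm →
      BorderedDetIdentity G) :
    BorderedDetIdentity C := by
  let val : {i // i ∉ Set.range f} → ι := Subtype.val
  let e : κ ⊕ {i // i ∉ Set.range f} ≃ ι :=
    ((Equiv.ofInjective f f.injective).sumCongr (Equiv.refl _)).trans (Equiv.sumCompl _)
  have hblocks : C.submatrix e e = Matrix.fromBlocks (C.submatrix f f) (C.submatrix f val)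
      (C.submatrix f val)ᵀ (C.submatrix val val) := by
    ext (i | i) (j | j)
    · rfl
    · rfl
    · exact hC.apply _ _
    · rfl
  have hschur : (C.submatrix val val - (C.submatrix f val)ᵀ * (C.submatrix f f)⁻¹
      * C.submatrix f val).IsSymm := by
    refine (hC.submatrix _).sub ?_
    simp [IsSymm, transpose_mul, (hC.submatrix f).inv.eq, hC.eq, Matrix.mul_assoc]
  refine .of_submatrix_equiv e ?_
  rw [hblocks]
  exact .fromBlocks_of_isUnit _ (hC.submatrix f) (hC.submatrix _) hunit hpivot (hrest _ hschur)

theorem BorderedDetIdentity.of_unit {c : ZMod 4} (hc : ¬Even c) :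
    BorderedDetIdentity (of fun _ _ : Unit => c) := fun r hr => by
  have hr' := hr ()
  rw [borderedDet_unit, det_unique, Fintype.card_unit, Nat.cast_one]
  simp only [of_apply] at hr' ⊢
  generalize r () = x at hr' ⊢
  rw [ZMod.even_four_iff] at hc hr'
  clear hr
  revert c x
  decide

theorem det_fin_two_of_even_diag {C : Matrix (Fin 2) (Fin 2) (ZMod 4)} (hC : C.IsSymm)
    (hdiag : ∀ i, Even (C i i)) (hoff : ¬Even (C 0 1)) : C.det = -1 := by
  rw [det_fin_two, hC.apply 0 1]
  have h0 := hdiag 0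
  have h1 := hdiag 1
  generalize C 0 0 = a, C 1 1 = b, C 0 1 = c at *
  rw [ZMod.even_four_iff] at h0 h1 hoff
  clear hC hdiag
  revert a b c
  decide

theorem BorderedDetIdentity.of_fin_two {C : Matrix (Fin 2) (Fin 2) (ZMod 4)} (hC : C.IsSymm)
    (hdiag : ∀ i, Even (C i i)) (hoff : ¬Even (C 0 1)) : BorderedDetIdentity C := fun r hr => by
  rw [borderedDet_eq_zero_of_even C fun i => by simpa using (hdiag i).sub (hr i),
    det_fin_two_of_even_diag hC hdiag hoff, Fintype.card_fin]
  decide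

theorem BorderedDetIdentity.of_forall_even {C : Matrix ι ι (ZMod 4)}
    (hC : ∀ i j, Even (C i j)) : BorderedDetIdentity C := fun r hr => by
  rw [borderedDet_eq_zero_of_even C fun i => by simpa using (hC i i).sub (hr i)]
  choose C' hC' using fun i j => (hC i j).exists_two_nsmul
  have hC2 : C = (2 : ZMod 4) • of C' := by
    ext i j
    rw [hC', two_nsmul, Matrix.smul_apply, two_smul]
    rfl
  rw [hC2, det_smul]
  rcases h : Fintype.card ι with _ | _ | m
  · have : IsEmpty ι := Fintype.card_eq_zero_iff.1 h
    simp
  · generalize (of C').det = x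
    revert x
    decide
  · rw [show (2 : ZMod 4) ^ (m + 2) = 0 by rw [pow_add, show (2 : ZMod 4) ^ 2 = 0 by decide,
      mul_zero]]
    simp

theorem Matrix.IsSymm.borderedDetIdentity {C : Matrix ι ι (ZMod 4)} (hC : C.IsSymm) :
    BorderedDetIdentity C := by
  induction h : Fintype.card ι using Nat.strong_induction_on generalizing ι with
  | _ m ih =>
  have hrest {κ : Type} [Fintype κ] (f : κ ↪ ι) (k : κ)
      (G : Matrix {i // i ∉ Set.range f} {i // i ∉ Set.range f} (ZMod 4)) (hG : G.IsSymm) :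
      BorderedDetIdentity G :=
    ih _ (h ▸ Fintype.card_subtype_lt (x := f k) (by simp)) hG rfl
  by_cases hdiag : ∃ k, ¬Even (C k k)
  · obtain ⟨k, hk⟩ := hdiag
    exact .of_pivot hC (Function.Embedding.punit k)
      (by rw [det_unique]; exact ZMod.isUnit_of_not_even_four hk) (.of_unit hk)
      (hrest _ PUnit.unit)
  push Not at hdiag
  by_cases hoff : ∃ k l, ¬Even (C k l)
  · obtain ⟨k, l, hkl⟩ := hoff
    have hne : k ≠ l := by rintro rfl; exact hkl (hdiag k)
    have hpivot := hC.submatrix (Function.Embedding.embFinTwo hne)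
    exact .of_pivot hC (Function.Embedding.embFinTwo hne)
      (by rw [det_fin_two_of_even_diag hpivot (fun i => hdiag _) hkl]; exact isUnit_one.neg)
      (.of_fin_two hpivot (fun i => hdiag _) hkl) (hrest _ 0)
  push Not at hoff
  exact .of_forall_even hoff

end Identity

section Minor

variable {ι : Type*} [Fintype ι] [DecidableEq ι]

theorem Matrix.IsSymm.det_eq_sq_det_submatrix_ne {B : Matrix ι ι (ZMod 4)} (hB : B.IsSymm)
    (i₀ : ι) (h₀ : B i₀ i₀ = Fintype.card ι) (hchar : ∀ i, Even (B i i - B i₀ i)) :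
    B.det = (B.submatrix Subtype.val Subtype.val :
      Matrix {i // i ≠ i₀} {i // i ≠ i₀} (ZMod 4)).det ^ 2 := by
  let e : Unit ⊕ {i // i ≠ i₀} ≃ ι := (Equiv.sumComm _ _).trans (Equiv.subtypeNeSumPUnit i₀)
  set C : Matrix {i // i ≠ i₀} {i // i ≠ i₀} (ZMod 4) := B.submatrix Subtype.val Subtype.val
  set r : {i // i ≠ i₀} → ZMod 4 := fun i => B i₀ i
  have hblocks : B.submatrix e e = Matrix.fromBlocks (of fun _ _ => B i₀ i₀)
      (replicateRow Unit r) (replicateCol Unit r) C := by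
    ext (_ | i) (_ | j)
    · rfl
    · rfl
    · exact hB.apply _ _
    · rfl
  have hcard : Fintype.card ι = Fintype.card {i // i ≠ i₀} + 1 := by
    rw [← Fintype.card_congr e, Fintype.card_sum, Fintype.card_unit, add_comm]
  rw [← det_submatrix_equiv_self e, hblocks, det_fromBlocks_eq_mul_det_add_borderedDet,
    (hB.submatrix _).borderedDetIdentity r fun i => hchar i, h₀, hcard, Nat.cast_add,
    Nat.cast_one]
  ring

theorem Matrix.IsSymm.det_modEq_sq_det_submatrix_ne {B : Matrix ι ι ℤ} (hB : B.IsSymm) (i₀ : ι)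
    (h₀ : B i₀ i₀ = Fintype.card ι) (hchar : ∀ i, Even (B i i - B i₀ i)) :
    B.det ≡ (B.submatrix Subtype.val Subtype.val :
      Matrix {i // i ≠ i₀} {i // i ≠ i₀} ℤ).det ^ 2 [ZMOD 4] := by
  refine (ZMod.intCast_eq_intCast_iff _ _ 4).1 ?_
  rw [Int.cast_pow, Int.cast_det, Int.cast_det]
  refine (hB.map _).det_eq_sq_det_submatrix_ne i₀ (by simp [h₀]) fun i => ?_
  simpa using (hchar i).intCast (α := ZMod 4)

end Minor

section Dpf

variable {n : ℕ} [NeZero n]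

theorem prod_dpf_factor_eq_prod {D : Matrix (Fin n) (Fin n) (ZMod 2)} (hD : D.IsSymm)
    (hdiag : ∀ i, D i i = D 0 i) {σ : Equiv.Perm (Fin n)} (hσσ : σ * σ = 1) (hσ0 : σ 0 = 0) :
    ∏ i ∈ univ.filter (· ≠ 0), (if σ i = i then D 0 i else if i < σ i then D i (σ i) else 1)
      = ∏ i ∈ univ.filter (· ≠ 0), D (σ i) i := by
  set g : Fin n → ZMod 2 := fun i => if σ i = i then D 0 i else if i < σ i then D i (σ i) else 1
  have hσ (i : Fin n) : σ (σ i) = i := by rw [← Equiv.Perm.mul_apply, hσσ, Equiv.Perm.one_apply]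
  -- `D (σ i) i` is the product of the factors at the two ends of the orbit `{i, σ i}`
  -- (for a fixed point, `x * x = x` in `ZMod 2`)
  have hsplit (i : Fin n) : D (σ i) i = g i * g (σ i) := by
    by_cases hfix : σ i = i
    · simp only [g, hfix, if_true, ← sq, ZMod.pow_card, hdiag]
    rcases lt_or_gt_of_ne hfix with hlt | hgt
    · simp [g, hσ, hfix, Ne.symm hfix, hlt, hlt.not_gt]
    · simp [g, hσ, hfix, Ne.symm hfix, hgt, hgt.not_gt, hD.apply]
  rw [prod_congr rfl fun i _ => hsplit i, prod_mul_distrib,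
    σ.prod_comp _ g fun x hx => by simpa using fun h : x = 0 => hx (h ▸ hσ0), ← sq, ZMod.pow_card]

theorem dpf_modEq_det_submatrix_ne {B : Matrix (Fin n) (Fin n) ℤ} (hB : B.IsSymm)
    (hchar : ∀ i, Even (B i i - B 0 i)) :
    dpf n B ≡ (B.submatrix Subtype.val Subtype.val :
      Matrix {i : Fin n // i ≠ 0} {i : Fin n // i ≠ 0} ℤ).det [ZMOD 2] := by
  refine (ZMod.intCast_eq_intCast_iff _ _ 2).1 ?_
  set D := B.map (Int.cast : ℤ → ZMod 2)
  have hD : D.IsSymm := hB.map _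
  have hdiag (i : Fin n) : D i i = D 0 i := by
    simpa [sub_eq_zero, D] using (hchar i).intCast_zmod_two
  rw [Int.cast_det, ← submatrix_map, (hD.submatrix _).det_eq_sum_involutions_of_charTwo]
  simp only [submatrix_apply]
  rw [← sum_involutions_fixing_eq_sum_subtype, dpf]
  push_cast
  refine sum_congr rfl fun σ hσ => ?_
  obtain ⟨-, hσσ, hσ0⟩ := mem_filter.1 hσ
  exact prod_dpf_factor_eq_prod hD hdiag hσσ hσ0

end Dpf

theorem Matrix.even_trace_mul_self_sub_trace {ι : Type*} [Fintype ι] [DecidableEq ι]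
    (M : Matrix ι ι ℤ) : Even ((M * M).trace - M.trace) := by
  let φ := Int.castRingHom (ZMod 2)
  have h := ZMod.trace_pow_card (M.map φ)
  rw [sq, ← Matrix.map_mul, ZMod.pow_card, ← AddMonoidHom.map_trace,
    ← AddMonoidHom.map_trace] at h
  rw [← ZMod.intCast_eq_zero_iff_even, Int.cast_sub, sub_eq_zero]
  exact h

theorem Int.sq_modEq_four_of_modEq_two {a b : ℤ} (h : a ≡ b [ZMOD 2]) :
    a ^ 2 ≡ b ^ 2 [ZMOD 4] := by
  obtain ⟨c, hc⟩ := Int.modEq_iff_dvd.1 h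
  exact Int.modEq_iff_dvd.2 ⟨a * c + c ^ 2, by linear_combination (b + a + 2 * c) * hc⟩

section Gram

variable {n : ℕ} {A : Type} [Ring A] (b : Module.Basis (Fin n) ℤ A)

theorem gramMatrix_isSymm : (gramMatrix b).IsSymm :=
  IsSymm.ext fun i j => by rw [gramMatrix, of_apply, of_apply, map_mul, map_mul, trace_mul_comm]

theorem gramMatrix_apply_self (i : Fin n) :
    gramMatrix b i i = (Algebra.leftMulMatrix b (b i) * Algebra.leftMulMatrix b (b i)).trace := by
  rw [gramMatrix, of_apply, map_mul]

theorem gramMatrix_apply_of_eq_one {i₀ : Fin n} (hb : b i₀ = 1) (i : Fin n) :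
    gramMatrix b i₀ i = (Algebra.leftMulMatrix b (b i)).trace := by
  rw [gramMatrix, of_apply, hb, one_mul]

end Gram

/-- If `A` is a ring of rank `n` with a unital ℤ-basis `b` (i.e. `b 0 = 1`), then
`disc(A) ≡ dpf(B(A,b))² (mod 4)`, where `B(A,b)` is the Gram matrix of the trace
pairing in the basis `b`. -/
theorem disc_modEq_dpf_sq (n : ℕ) [NeZero n] (A : Type) [Ring A]
    (b : Module.Basis (Fin n) ℤ A) (hb : b 0 = 1) :
    disc b ≡ (dpf n (gramMatrix b)) ^ 2 [ZMOD 4] := by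
  have hsymm := gramMatrix_isSymm b
  have h₀ : gramMatrix b 0 0 = Fintype.card (Fin n) := by
    rw [gramMatrix_apply_of_eq_one b hb, hb, map_one, trace_one]
  have hchar (i : Fin n) : Even (gramMatrix b i i - gramMatrix b 0 i) := by
    rw [gramMatrix_apply_self, gramMatrix_apply_of_eq_one b hb]
    exact even_trace_mul_self_sub_trace _
  exact (hsymm.det_modEq_sq_det_submatrix_ne 0 h₀ hchar).trans
    (Int.sq_modEq_four_of_modEq_two (dpf_modEq_det_submatrix_ne hsymm hchar)).symm
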